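/- arXiv:0906.4255 — 2 statements merged into one kernel-verified Lean document; each statement's English description precedes it below -/
import Mathlib

section
/- Let (E_t, β_{s,t}) be a subproduct system of two-dimensional Hilbert spaces. Then the restricted subproduct system (E_{2t}, β_{2s,2t})_{s,t∈{1,2,...}} admits no basis of type E_2(a) for any a ∈ [0,1). -/
noncomputable section

open scoped TensorProduct ComplexConjugate

namespace SubprodHilbert

section TensorConstruction


variable {E F : Type*} [NormedAddCommGroup E] [InnerProductSpace ℂ E]
  [NormedAddCommGroup F] [InnerProductSpace ℂ F]

local notation "⟪" x ", " y "⟫" => @inner ℂ _ _ x y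

/-- For fixed `u, v`, the ℂ-bilinear functional `(u', v') ↦ ⟪u,u'⟫ ⟪v,v'⟫`. -/
def innerAux (u : E) (v : F) : E →ₗ[ℂ] F →ₗ[ℂ] ℂ :=
  LinearMap.mk₂ ℂ (fun u' v' => ⟪u, u'⟫ * ⟪v, v'⟫)
    (fun m₁ m₂ n => by simp [inner_add_right]; ring)
    (fun c m n => by simp [inner_smul_right]; ring)
    (fun m n₁ n₂ => by simp [inner_add_right]; ring)
    (fun c m n => by simp [inner_smul_right]; ring)

@[simp] lemma innerAux_apply (u u' : E) (v v' : F) :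
    innerAux u v u' v' = ⟪u, u'⟫ * ⟪v, v'⟫ := rfl

/-- The (conjugate-linear-in-the-first-variable) map sending `z : E ⊗ F` to the linear
functional `w ↦ ⟪z, w⟫`. -/
def innerFunc : E ⊗[ℂ] F →+ (E ⊗[ℂ] F →ₗ[ℂ] ℂ) :=
  TensorProduct.liftAddHom
    (AddMonoidHom.mk'
      (fun u => AddMonoidHom.mk' (fun v => TensorProduct.lift (innerAux u v))
        (fun v₁ v₂ => by
          apply TensorProduct.ext'
          intro u' v'
          simp [inner_add_left]
          ring))
      (fun u₁ u₂ => by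
        ext v : 1
        apply TensorProduct.ext'
        intro u' v'
        simp [inner_add_left]
        ring))
    (fun c u v => by
      apply TensorProduct.ext'
      intro u' v'
      simp [inner_smul_left]
      ring)

@[simp] lemma innerFunc_tmul (u u' : E) (v v' : F) :
    innerFunc (u ⊗ₜ[ℂ] v) (u' ⊗ₜ[ℂ] v') = ⟪u, u'⟫ * ⟪v, v'⟫ := rfl

lemma innerFunc_smul (c : ℂ) (z : E ⊗[ℂ] F) :
    innerFunc (c • z) = conj c • innerFunc z := by
  induction z using TensorProduct.induction_on with
  | zero => simp
  | tmul u v =>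
      rw [TensorProduct.smul_tmul']
      apply TensorProduct.ext'
      intro u' v'
      simp [inner_smul_left]
      ring
  | add z₁ z₂ h₁ h₂ => rw [smul_add, map_add, map_add, h₁, h₂, smul_add]

lemma innerFunc_conj_symm (z w : E ⊗[ℂ] F) :
    conj (innerFunc w z) = innerFunc z w := by
  induction z using TensorProduct.induction_on with
  | zero => simp
  | tmul u v =>
      induction w using TensorProduct.induction_on with
      | zero => simp
      | tmul u' v' =>
          simp only [innerFunc_tmul, map_mul, inner_conj_symm]
      | add w₁ w₂ h₁ h₂ => simp [map_add, h₁, h₂]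
  | add z₁ z₂ h₁ h₂ => simp [map_add, h₁, h₂]

lemma exists_orthonormal_rep (z : E ⊗[ℂ] F) :
    ∃ (n : ℕ) (e : Fin n → E) (w : Fin n → F),
      Orthonormal ℂ e ∧ z = ∑ i, e i ⊗ₜ[ℂ] w i := by
  obtain ⟨S, rfl⟩ := TensorProduct.exists_finset z
  set U : Submodule ℂ E := Submodule.span ℂ (Prod.fst '' (S : Set (E × F))) with hU
  haveI : FiniteDimensional ℂ U :=
    FiniteDimensional.span_of_finite ℂ (S.finite_toSet.image _)
  let b : OrthonormalBasis (Fin (Module.finrank ℂ U)) ℂ U := stdOrthonormalBasis ℂ U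
  have hone : Orthonormal ℂ (fun i => (b i : E)) := by
    have hb := b.orthonormal
    constructor
    · intro i; simpa [norm] using hb.1 i
    · intro i j hij; simpa [Submodule.coe_inner] using hb.2 hij
  refine ⟨_, fun i => (b i : E), fun i => ∑ p ∈ S, ⟪(b i : E), p.1⟫ • p.2, hone, ?_⟩
  have key : ∀ p ∈ S, p.1 ⊗ₜ[ℂ] p.2 = ∑ i, ⟪(b i : E), p.1⟫ • ((b i : E) ⊗ₜ[ℂ] p.2) := by
    intro p hp
    have hmem : p.1 ∈ U := Submodule.subset_span ⟨p, hp, rfl⟩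
    have hrep : ((∑ i, (⟪b i, (⟨p.1, hmem⟩ : U)⟫ : ℂ) • b i : U) : E) = p.1 := by
      rw [b.sum_repr' ⟨p.1, hmem⟩]
    have h2 : ∀ i, (⟪b i, (⟨p.1, hmem⟩ : U)⟫ : ℂ) = ⟪(b i : E), p.1⟫ := fun i =>
      Submodule.coe_inner U (b i) ⟨p.1, hmem⟩
    have hrep' : p.1 = ∑ i, ⟪(b i : E), p.1⟫ • (b i : E) := by
      calc p.1 = ((∑ i, (⟪b i, (⟨p.1, hmem⟩ : U)⟫ : ℂ) • b i : U) : E) := hrep.symm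
        _ = ∑ i, (⟪b i, (⟨p.1, hmem⟩ : U)⟫ : ℂ) • (b i : E) := by push_cast; rfl
        _ = ∑ i, ⟪(b i : E), p.1⟫ • (b i : E) := Finset.sum_congr rfl fun i _ => by rw [h2]
    calc p.1 ⊗ₜ[ℂ] p.2 = (∑ i, ⟪(b i : E), p.1⟫ • (b i : E)) ⊗ₜ[ℂ] p.2 := by rw [← hrep']
      _ = ∑ i, ⟪(b i : E), p.1⟫ • ((b i : E) ⊗ₜ[ℂ] p.2) := by
          rw [TensorProduct.sum_tmul]
          refine Finset.sum_congr rfl fun i _ => ?_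
          rw [TensorProduct.smul_tmul']
  calc ∑ p ∈ S, p.1 ⊗ₜ[ℂ] p.2
      = ∑ p ∈ S, ∑ i, ⟪(b i : E), p.1⟫ • ((b i : E) ⊗ₜ[ℂ] p.2) :=
        Finset.sum_congr rfl key
    _ = ∑ i, ∑ p ∈ S, ⟪(b i : E), p.1⟫ • ((b i : E) ⊗ₜ[ℂ] p.2) := Finset.sum_comm
    _ = ∑ i, (b i : E) ⊗ₜ[ℂ] (∑ p ∈ S, ⟪(b i : E), p.1⟫ • p.2) := by
        refine Finset.sum_congr rfl fun i _ => ?_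
        rw [TensorProduct.tmul_sum]
        refine Finset.sum_congr rfl fun p _ => ?_
        rw [TensorProduct.tmul_smul]

lemma innerFunc_self (n : ℕ) (e : Fin n → E) (w : Fin n → F) (he : Orthonormal ℂ e) :
    innerFunc (∑ i, e i ⊗ₜ[ℂ] w i) (∑ i, e i ⊗ₜ[ℂ] w i) = ∑ i, ⟪w i, w i⟫ := by
  have hee : ∀ i j, (⟪e i, e j⟫ : ℂ) = if i = j then 1 else 0 := orthonormal_iff_ite.mp he
  simp only [map_sum, LinearMap.coe_sum, Finset.sum_apply, innerFunc_tmul, hee, ite_mul,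
    one_mul, zero_mul]
  rw [Finset.sum_comm]
  simp

/-- The inner-product-space core on the algebraic tensor product of two complex
inner product spaces, determined by `⟪u ⊗ v, u' ⊗ v'⟫ = ⟪u,u'⟫ ⟪v,v'⟫`. -/
def tensorCore : InnerProductSpace.Core ℂ (E ⊗[ℂ] F) where
  inner z w := innerFunc z w
  conj_inner_symm := innerFunc_conj_symm
  re_inner_nonneg z := by
    show 0 ≤ RCLike.re (innerFunc z z)
    obtain ⟨n, e, w, he, rfl⟩ := exists_orthonormal_rep z
    rw [innerFunc_self n e w he]
    rw [map_sum]
    exact Finset.sum_nonneg fun i _ => inner_self_nonneg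
  add_left z₁ z₂ w := by
    show innerFunc (z₁ + z₂) w = innerFunc z₁ w + innerFunc z₂ w
    rw [map_add]; rfl
  smul_left z w c := by
    show innerFunc (c • z) w = conj c * innerFunc z w
    rw [innerFunc_smul]; rfl
  definite z hz := by
    replace hz : innerFunc z z = 0 := hz
    obtain ⟨n, e, w, he, rfl⟩ := exists_orthonormal_rep z
    rw [innerFunc_self n e w he] at hz
    have hz' : ∑ i, (‖w i‖ ^ 2 : ℝ) = 0 := by
      have := congrArg Complex.re hz
      simpa [← @inner_self_eq_norm_sq ℂ] using this
    have hw : ∀ i ∈ Finset.univ, w i = 0 := by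
      intro i hi
      have h0 : (‖w i‖ ^ 2 : ℝ) = 0 :=
        (Finset.sum_eq_zero_iff_of_nonneg fun j _ => sq_nonneg _).mp hz' i hi
      simpa using h0
    calc ∑ i, e i ⊗ₜ[ℂ] w i = ∑ i : Fin n, (0 : E ⊗[ℂ] F) :=
          Finset.sum_congr rfl fun i hi => by rw [hw i hi, TensorProduct.tmul_zero]
      _ = 0 := Finset.sum_const_zero

instance tensorNormedAddCommGroup : NormedAddCommGroup (E ⊗[ℂ] F) :=
  @InnerProductSpace.Core.toNormedAddCommGroup ℂ _ _ _ _ tensorCore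

instance tensorInnerProductSpace : InnerProductSpace ℂ (E ⊗[ℂ] F) :=
  InnerProductSpace.ofCore tensorCore.toCore

@[simp] lemma inner_tmul (u u' : E) (v v' : F) :
    (inner ℂ (u ⊗ₜ[ℂ] v) (u' ⊗ₜ[ℂ] v') : ℂ) = ⟪u, u'⟫ * ⟪v, v'⟫ := rfl
end TensorConstruction


/-- Cast between the fibers of a family of inner product spaces along an equality of
indices, as a linear isometric isomorphism. -/
def castE {ι : Type*} (E : ι → Type*) [∀ t, NormedAddCommGroup (E t)]
    [∀ t, InnerProductSpace ℂ (E t)] {a b : ι} (h : a = b) : E a ≃ₗᵢ[ℂ] E b := by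
  subst h; exact LinearIsometryEquiv.refl ℂ (E a)


section Discrete

variable (E F : ℕ+ → Type*)
  [∀ t, NormedAddCommGroup (E t)] [∀ t, InnerProductSpace ℂ (E t)]
  [∀ t, NormedAddCommGroup (F t)] [∀ t, InnerProductSpace ℂ (F t)]
variable (β : ∀ s t : ℕ+, E (s + t) →ₗᵢ[ℂ] (E s ⊗[ℂ] E t))
variable (γ : ∀ s t : ℕ+, F (s + t) →ₗᵢ[ℂ] (F s ⊗[ℂ] F t))

/-- The associativity condition in the definition of a subproduct system. -/
def SubprodAssoc : Prop :=
  ∀ r s t : ℕ+, ∀ u : E (r + s + t),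
    (TensorProduct.assoc ℂ (E r) (E s) (E t))
      (TensorProduct.map (β r s).toLinearMap LinearMap.id (β (r + s) t u))
    = TensorProduct.map LinearMap.id (β s t).toLinearMap
        (β r (s + t) (castE E (add_assoc r s t) u))

/-- `(x, y)` is a basis of type `𝓔₁(a)` of the subproduct system `(E, β)`. -/
def IsBasisE1 (a : ℝ) (x y : ∀ t : ℕ+, E t) : Prop :=
  (∀ t, ‖x t‖ = 1) ∧ (∀ t, ‖y t‖ = 1) ∧
  (∀ t : ℕ+, (inner ℂ (x t) (y t) : ℂ) = (a : ℂ) ^ (t : ℕ)) ∧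
  (∀ s t : ℕ+, β s t (x (s + t)) = x s ⊗ₜ[ℂ] x t) ∧
  (∀ s t : ℕ+, β s t (y (s + t)) = y s ⊗ₜ[ℂ] y t)

/-- `(x, y)` is a basis of type `𝓔₂(a)` of the subproduct system `(E, β)`. -/
def IsBasisE2 (a : ℝ) (x y : ∀ t : ℕ+, E t) : Prop :=
  (∀ t, ‖x t‖ = 1) ∧ (∀ t, ‖y t‖ = 1) ∧
  (∀ t : ℕ+, (inner ℂ (x t) (y t) : ℂ) = (a : ℂ) ^ (t : ℕ)) ∧
  (∀ s t : ℕ+, Even (s : ℕ) → β s t (x (s + t)) = x s ⊗ₜ[ℂ] x t) ∧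
  (∀ s t : ℕ+, ¬ Even (s : ℕ) → β s t (x (s + t)) = x s ⊗ₜ[ℂ] y t) ∧
  (∀ s t : ℕ+, Even (s : ℕ) → β s t (y (s + t)) = y s ⊗ₜ[ℂ] y t) ∧
  (∀ s t : ℕ+, ¬ Even (s : ℕ) → β s t (y (s + t)) = y s ⊗ₜ[ℂ] x t)

/-- `(x, y)` is a basis of type `𝓔₃(λ)` of the subproduct system `(E, β)`. -/
def IsBasisE3 (l : ℂ) (x y : ∀ t : ℕ+, E t) : Prop :=
  (∀ t, ‖x t‖ = 1) ∧
  (∀ t : ℕ+, ‖y t‖ ^ 2 = ∑ k ∈ Finset.range (t : ℕ), ‖l‖ ^ (2 * k)) ∧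
  (∀ t : ℕ+, (inner ℂ (x t) (y t) : ℂ) = 0) ∧
  (∀ s t : ℕ+, β s t (x (s + t)) = x s ⊗ₜ[ℂ] x t) ∧
  (∀ s t : ℕ+, β s t (y (s + t)) = y s ⊗ₜ[ℂ] x t + l ^ (s : ℕ) • (x s ⊗ₜ[ℂ] y t))

/-- `(x, y)` is a basis of type `𝓔₄` of the subproduct system `(E, β)`. -/
def IsBasisE4 (x y : ∀ t : ℕ+, E t) : Prop :=
  (∀ t, ‖x t‖ = 1) ∧ (∀ t, ‖y t‖ = 1) ∧
  (∀ t : ℕ+, (inner ℂ (x t) (y t) : ℂ) = 0) ∧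
  (∀ s t : ℕ+, β s t (x (s + t)) = x s ⊗ₜ[ℂ] x t) ∧
  (∀ s t : ℕ+, β s t (y (s + t)) = y s ⊗ₜ[ℂ] x t)

/-- `(x, y)` is a basis of type `𝓔₅` of the subproduct system `(E, β)`. -/
def IsBasisE5 (x y : ∀ t : ℕ+, E t) : Prop :=
  (∀ t, ‖x t‖ = 1) ∧ (∀ t, ‖y t‖ = 1) ∧
  (∀ t : ℕ+, (inner ℂ (x t) (y t) : ℂ) = 0) ∧
  (∀ s t : ℕ+, β s t (x (s + t)) = x s ⊗ₜ[ℂ] x t) ∧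
  (∀ s t : ℕ+, β s t (y (s + t)) = x s ⊗ₜ[ℂ] y t)

/-- The five types of bases, together with their parameters. -/
inductive BType : Type
  | e1 (a : ℝ) | e2 (a : ℝ) | e3 (l : ℂ) | e4 | e5

/-- `(x, y)` is a basis of the subproduct system `(E, β)` of the given type (this includes
the admissibility constraints `a ∈ [0,1)`, resp. `λ ≠ 0`, on the parameter). -/
def IsBasisOfType : BType → (∀ t : ℕ+, E t) → (∀ t : ℕ+, E t) → Prop
  | .e1 a => fun x y => 0 ≤ a ∧ a < 1 ∧ IsBasisE1 E β a x y
  | .e2 a => fun x y => 0 ≤ a ∧ a < 1 ∧ IsBasisE2 E β a x y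
  | .e3 l => fun x y => l ≠ 0 ∧ IsBasisE3 E β l x y
  | .e4 => fun x y => IsBasisE4 E β x y
  | .e5 => fun x y => IsBasisE5 E β x y

/-- The family `θ` of unitaries intertwines the subproduct systems `(E, β)` and `(F, γ)`,
i.e. it is an isomorphism of subproduct systems. -/
def Intertwines (θ : ∀ t : ℕ+, E t ≃ₗᵢ[ℂ] F t) : Prop :=
  ∀ s t : ℕ+, ∀ w : E (s + t),
    γ s t (θ (s + t) w) =
      TensorProduct.map (θ s).toLinearEquiv.toLinearMap (θ t).toLinearEquiv.toLinearMap
        (β s t w)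

/-- The structure maps of the subproduct system `(E_{mt})_t` obtained by restricting
`(E, β)` to the multiples of `m`. -/
def restrictβ (m : ℕ+) :
    ∀ s t : ℕ+, E (m * (s + t)) →ₗᵢ[ℂ] (E (m * s) ⊗[ℂ] E (m * t)) := fun s t =>
  (β (m * s) (m * t)).comp (castE E (by rw [mul_add])).toLinearIsometry

end Discrete

/-!
Let `x = β₁₁ u₁` and `y = β₁₁ v₁` in `E₁ ⊗ E₁`. Since `a < 1`, the vectors `u₁, v₁` are independent,
so they span the two-dimensional `E₂`, and `x, y` are independent and span the range `K` of `β₁₁`.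
By associativity, `(β₁₁ ⊗ β₁₁) β₂₂` has its two middle legs in `K`. Applied to
`β₂₂ u₂ = u₁ ⊗ v₁` and `β₂₂ v₂ = v₁ ⊗ u₁`, this puts `(f ⊗ 1) x ⊗ (1 ⊗ g) y` and
`(f ⊗ 1) y ⊗ (1 ⊗ g) x` in `K` for all functionals `f, g`. In coordinates: each row of `X` tensored
with each column of `Y`, and vice versa, lies in `span {X, Y}`. A dimension count forces
`det X = det Y = 0`, so `X = p ⊗ q` and `Y = s ⊗ t` with `q ⊗ s, t ⊗ p ∈ span {p ⊗ q, s ⊗ t}`, which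
makes `p, q, s, t` parallel and contradicts independence.
-/

lemma _root_.LinearIndependent.pair_map {R M N : Type*} [Ring R] [AddCommGroup M] [Module R M]
    [AddCommGroup N] [Module R N] {x y : M} (h : LinearIndependent R ![x, y]) {f : M →ₗ[R] N}
    (hf : Function.Injective f) : LinearIndependent R ![f x, f y] := by
  rw [LinearIndependent.pair_iff] at h ⊢
  exact fun s t hst => h s t (hf (by simpa using hst))

lemma linearIndependent_pair_of_norm_inner_lt {𝕜 F : Type*} [RCLike 𝕜] [NormedAddCommGroup F]
    [InnerProductSpace 𝕜 F] {x y : F} (hx : x ≠ 0) (h : ‖inner 𝕜 x y‖ < ‖x‖ * ‖y‖) :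
    LinearIndependent 𝕜 ![x, y] := by
  rw [LinearIndependent.pair_iff' hx]
  rintro c rfl
  have := (norm_inner_eq_norm_tfae 𝕜 x (c • x)).out 0 2
  exact h.ne (this.2 (Or.inr ⟨c, rfl⟩))

section Contraction

variable {R M N P : Type*} [CommSemiring R] [AddCommMonoid M] [Module R M]
  [AddCommMonoid N] [Module R N] [AddCommMonoid P] [Module R P]

def contrLeft (f : Module.Dual R M) : M ⊗[R] N →ₗ[R] N :=
  TensorProduct.lid R N ∘ₗ TensorProduct.map f LinearMap.id

def contrRight (g : Module.Dual R N) : M ⊗[R] N →ₗ[R] M :=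
  TensorProduct.rid R M ∘ₗ TensorProduct.map LinearMap.id g

@[simp] lemma contrLeft_tmul (f : Module.Dual R M) (m : M) (n : N) :
    contrLeft f (m ⊗ₜ[R] n) = f m • n := by
  simp [contrLeft]

@[simp] lemma contrRight_tmul (g : Module.Dual R N) (m : M) (n : N) :
    contrRight g (m ⊗ₜ[R] n) = g n • m := by
  simp [contrRight]

lemma contrLeft_map_id (f : Module.Dual R M) (k : N →ₗ[R] P) (z : M ⊗[R] N) :
    contrLeft f (TensorProduct.map LinearMap.id k z) = k (contrLeft f z) := by
  induction z using TensorProduct.induction_on with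
  | zero => simp
  | tmul m n => simp
  | add z₁ z₂ h₁ h₂ => simp only [map_add, h₁, h₂]

lemma contrRight_map_id (g : Module.Dual R N) (k : M →ₗ[R] P) (z : M ⊗[R] N) :
    contrRight g (TensorProduct.map k LinearMap.id z) = k (contrRight g z) := by
  induction z using TensorProduct.induction_on with
  | zero => simp
  | tmul m n => simp
  | add z₁ z₂ h₁ h₂ => simp only [map_add, h₁, h₂]

lemma map_contrLeft_assoc_symm (f : Module.Dual R M) (z : M ⊗[R] (N ⊗[R] P)) :
    TensorProduct.map (contrLeft f) LinearMap.id ((TensorProduct.assoc R M N P).symm z) =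
      contrLeft f z := by
  induction z using TensorProduct.induction_on with
  | zero => simp
  | tmul m w =>
    induction w using TensorProduct.induction_on with
    | zero => simp
    | tmul n p => simp [TensorProduct.smul_tmul']
    | add w₁ w₂ h₁ h₂ => simp only [TensorProduct.tmul_add, map_add, h₁, h₂]
  | add z₁ z₂ h₁ h₂ => simp only [map_add, h₁, h₂]

lemma map_contrRight_assoc (g : Module.Dual R P) (z : (M ⊗[R] N) ⊗[R] P) :
    TensorProduct.map LinearMap.id (contrRight g) (TensorProduct.assoc R M N P z) =
      contrRight g z := by
  induction z using TensorProduct.induction_on with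
  | zero => simp
  | tmul w p =>
    induction w using TensorProduct.induction_on with
    | zero => simp
    | tmul m n => simp [TensorProduct.tmul_smul]
    | add w₁ w₂ h₁ h₂ => simp only [TensorProduct.add_tmul, map_add, h₁, h₂]
  | add z₁ z₂ h₁ h₂ => simp only [map_add, h₁, h₂]

end Contraction

section TensorMatrix

open Matrix Module

variable {R M N : Type*} [CommSemiring R] [AddCommMonoid M] [Module R M]
  [AddCommMonoid N] [Module R N] {ι κ : Type*} [Fintype ι] [Fintype κ]
  (b : Basis ι R M) (c : Basis κ R N)

def tensorMatrix : M ⊗[R] N ≃ₗ[R] Matrix ι κ R :=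
  (b.tensorProduct c).equivFun ≪≫ₗ LinearEquiv.curry R R ι κ ≪≫ₗ Matrix.ofLinearEquiv R

@[simp] lemma tensorMatrix_tmul (m : M) (n : N) :
    tensorMatrix b c (m ⊗ₜ[R] n) = vecMulVec (b.repr m) (c.repr n) := by
  ext i j
  simp [tensorMatrix, Basis.tensorProduct_repr_tmul_apply, vecMulVec_apply, mul_comm]

lemma repr_contrLeft_coord (z : M ⊗[R] N) (i : ι) :
    ⇑(c.repr (contrLeft (b.coord i) z)) = tensorMatrix b c z i := by
  induction z using TensorProduct.induction_on with
  | zero => ext; simp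
  | tmul m n => ext j; simp [vecMulVec_apply]
  | add z₁ z₂ h₁ h₂ => ext j; simp [h₁, h₂]

lemma repr_contrRight_coord (z : M ⊗[R] N) (l : κ) :
    ⇑(b.repr (contrRight (c.coord l) z)) = (tensorMatrix b c z)ᵀ l := by
  induction z using TensorProduct.induction_on with
  | zero => ext; simp
  | tmul m n => ext j; simp [vecMulVec_apply, mul_comm]
  | add z₁ z₂ h₁ h₂ => ext j; simp [h₁, h₂]

end TensorMatrix

section TwoByTwo

open Matrix Module

variable {𝕜 : Type*} [Field 𝕜]

lemma det_eq_zero_of_vecMulVec_row_mem {n : Type*} [Fintype n] [DecidableEq n] [Nontrivial n]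
    {S : Submodule 𝕜 (Matrix n n 𝕜)} (hS : finrank 𝕜 S ≤ Fintype.card n) {X : Matrix n n 𝕜}
    (hX : X ∈ S) {c : n → 𝕜} (hc : c ≠ 0) (h : ∀ i, vecMulVec (X i) c ∈ S) : X.det = 0 := by
  by_contra hdet
  let L := (vecMulVecBilin 𝕜 𝕜 (m := n) (n := n) (A := 𝕜)).flip c
  have hL : Function.Injective L :=
    (injective_iff_map_eq_zero L).2 fun w hw => by simpa [L, hc] using hw
  have hrows : Submodule.span 𝕜 (Set.range X.row) = ⊤ :=
    (linearIndependent_rows_iff_isUnit.2 ((isUnit_iff_isUnit_det X).2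
      (isUnit_iff_ne_zero.2 hdet))).span_eq_top_of_card_eq_finrank' (by simp)
  have hle : LinearMap.range L ≤ S := by
    rw [LinearMap.range_eq_map, ← hrows, Submodule.map_span, Submodule.span_le]
    rintro _ ⟨_, ⟨i, rfl⟩, rfl⟩
    exact h i
  obtain ⟨w, rfl⟩ : X ∈ LinearMap.range L := by
    rwa [Submodule.eq_of_le_of_finrank_le hle
      (by rwa [LinearMap.finrank_range_of_inj hL, finrank_fintype_fun_eq_card])]
  exact hdet (det_vecMulVec w c)

def cross (u v : Fin 2 → 𝕜) : 𝕜 := u 0 * v 1 - u 1 * v 0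

@[simp] lemma cross_self (u : Fin 2 → 𝕜) : cross u u = 0 := by
  simp [cross, mul_comm]

lemma cross_comm (u v : Fin 2 → 𝕜) : cross v u = - cross u v := by
  simp only [cross]; ring

@[simp] lemma cross_smul (u v : Fin 2 → 𝕜) (c : 𝕜) : cross u (c • v) = c * cross u v := by
  simp only [cross, Pi.smul_apply, smul_eq_mul]; ring

lemma exists_smul_eq_of_cross_eq_zero {u v : Fin 2 → 𝕜} (hu : u ≠ 0) (h : cross u v = 0) :
    ∃ c : 𝕜, c • u = v := by
  have hdep : ¬ LinearIndependent 𝕜 (of ![u, v]).row := by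
    rw [linearIndependent_rows_iff_isUnit, isUnit_iff_isUnit_det, det_fin_two]
    simpa [cross] using h
  change ¬ LinearIndependent 𝕜 ![u, v] at hdep
  simpa [LinearIndependent.pair_iff' hu] using hdep

lemma exists_eq_vecMulVec_of_det_eq_zero {X : Matrix (Fin 2) (Fin 2) 𝕜} (h : X.det = 0) :
    ∃ p q : Fin 2 → 𝕜, X = vecMulVec p q := by
  by_cases h0 : X 0 = 0
  · refine ⟨![0, 1], X 1, ?_⟩
    ext i j
    fin_cases i
    · simp [vecMulVec_apply, congrFun h0 j]
    · simp [vecMulVec_apply]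
  · obtain ⟨d, hd⟩ := exists_smul_eq_of_cross_eq_zero h0 (by rwa [det_fin_two] at h)
    refine ⟨![1, d], X 0, ?_⟩
    ext i j
    fin_cases i
    · simp [vecMulVec_apply]
    · simp [vecMulVec_apply, ← hd]

lemma cross_mul_cross_eq_zero_of_vecMulVec_mem_span {a b p q s t u v : Fin 2 → 𝕜}
    (hpq : cross a p * cross b q = 0) (hst : cross a s * cross b t = 0)
    (h : vecMulVec u v ∈ Submodule.span 𝕜 {vecMulVec p q, vecMulVec s t}) :
    cross a u * cross b v = 0 := by
  obtain ⟨α, γ, huv⟩ := Submodule.mem_span_pair.1 h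
  have e : ∀ j k, α * (p j * q k) + γ * (s j * t k) = u j * v k := fun j k => by
    simpa [vecMulVec_apply] using congrFun (congrFun huv j) k
  simp only [cross] at hpq hst ⊢
  linear_combination α * hpq + γ * hst - a 0 * b 0 * e 1 1 + a 0 * b 1 * e 1 0
    + a 1 * b 0 * e 0 1 - a 1 * b 1 * e 0 0

lemma exists_smul_vecMulVec_eq_of_vecMulVec_mem_span {p q s t : Fin 2 → 𝕜} (hp : p ≠ 0)
    (hq : q ≠ 0) (hs : s ≠ 0)
    (hqs : vecMulVec q s ∈ Submodule.span 𝕜 {vecMulVec p q, vecMulVec s t})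
    (htp : vecMulVec t p ∈ Submodule.span 𝕜 {vecMulVec p q, vecMulVec s t}) :
    ∃ c : 𝕜, c • vecMulVec p q = vecMulVec s t := by
  -- each pair `(a, b)` used below makes `cross a _ * cross b _` vanish on `p ⊗ q` and `s ⊗ t`
  have hpt : cross p t = 0 := by
    have := cross_mul_cross_eq_zero_of_vecMulVec_mem_span (a := p) (b := t) (by simp)
      (by simp) htp
    rw [cross_comm p t] at this
    simpa using this
  have hqs' : cross q s = 0 := by
    have := cross_mul_cross_eq_zero_of_vecMulVec_mem_span (a := s) (b := q) (by simp)
      (by simp) hqs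
    rw [cross_comm q s] at this
    simpa using this
  obtain ⟨l, rfl⟩ := exists_smul_eq_of_cross_eq_zero hp hpt
  obtain ⟨m, rfl⟩ := exists_smul_eq_of_cross_eq_zero hq hqs'
  have hpq : cross p q = 0 := by
    have := cross_mul_cross_eq_zero_of_vecMulVec_mem_span (a := p) (b := p) (by simp)
      (by simp) hqs
    rw [cross_smul] at this
    simpa [left_ne_zero_of_smul hs] using this
  obtain ⟨k, rfl⟩ := exists_smul_eq_of_cross_eq_zero hp hpq
  refine ⟨m * l, ?_⟩
  ext i j
  simp only [Matrix.smul_apply, vecMulVec_apply, Pi.smul_apply, smul_eq_mul]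
  ring

lemma vecMulVec_row_vecMulVec_col {n : Type*} (p q s t : n → 𝕜) (i l : n) :
    vecMulVec (vecMulVec p q i) ((vecMulVec s t)ᵀ l) = (p i * t l) • vecMulVec q s := by
  ext j k
  simp only [vecMulVec_apply, transpose_apply, Matrix.smul_apply, smul_eq_mul]
  ring

theorem not_linearIndependent_of_vecMulVec_mem_span {X Y : Matrix (Fin 2) (Fin 2) 𝕜}
    (hXY : ∀ i l, vecMulVec (X i) (Yᵀ l) ∈ Submodule.span 𝕜 {X, Y})
    (hYX : ∀ i l, vecMulVec (Y i) (Xᵀ l) ∈ Submodule.span 𝕜 {X, Y}) :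
    ¬ LinearIndependent 𝕜 ![X, Y] := by
  intro hind
  set S := Submodule.span 𝕜 {X, Y}
  have hX₀ : X ≠ 0 := hind.ne_zero 0
  have hY₀ : Y ≠ 0 := hind.ne_zero 1
  have hS : finrank 𝕜 S ≤ Fintype.card (Fin 2) := by
    classical
    exact (finrank_span_le_card (R := 𝕜) ({X, Y} : Set (Matrix (Fin 2) (Fin 2) 𝕜))).trans
      (by simpa using Finset.card_le_two)
  have hdet : ∀ {A B : Matrix (Fin 2) (Fin 2) 𝕜}, A ∈ S → B ≠ 0 →
      (∀ i l, vecMulVec (A i) (Bᵀ l) ∈ S) → A.det = 0 := by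
    intro A B hA hB h
    obtain ⟨l, hl⟩ : ∃ l, Bᵀ l ≠ 0 := by
      by_contra! h'
      exact hB (by ext i j; simpa using congrFun (h' j) i)
    exact det_eq_zero_of_vecMulVec_row_mem hS hA hl (h · l)
  obtain ⟨p, q, rfl⟩ := exists_eq_vecMulVec_of_det_eq_zero
    (hdet (Submodule.subset_span (by simp)) hY₀ hXY)
  obtain ⟨s, t, rfl⟩ := exists_eq_vecMulVec_of_det_eq_zero
    (hdet (Submodule.subset_span (by simp)) hX₀ hYX)
  obtain ⟨hp, hq⟩ : p ≠ 0 ∧ q ≠ 0 := by simpa [not_or] using hX₀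
  obtain ⟨hs, ht⟩ : s ≠ 0 ∧ t ≠ 0 := by simpa [not_or] using hY₀
  obtain ⟨i, hi⟩ := Function.ne_iff.1 hp
  obtain ⟨j, hj⟩ := Function.ne_iff.1 hq
  obtain ⟨k, hk⟩ := Function.ne_iff.1 hs
  obtain ⟨l, hl⟩ := Function.ne_iff.1 ht
  have hqs : vecMulVec q s ∈ S := by
    have := hXY i l
    rwa [vecMulVec_row_vecMulVec_col, Submodule.smul_mem_iff _ (mul_ne_zero hi hl)] at this
  have htp : vecMulVec t p ∈ S := by
    have := hYX k j
    rwa [vecMulVec_row_vecMulVec_col, Submodule.smul_mem_iff _ (mul_ne_zero hk hj)] at this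
  obtain ⟨c, hc⟩ := exists_smul_vecMulVec_eq_of_vecMulVec_mem_span hp hq hs hqs htp
  exact (LinearIndependent.pair_iff' hX₀).1 hind c hc

end TwoByTwo

open Module in
theorem not_linearIndependent_of_contr_tmul_mem_span {𝕜 V : Type*} [Field 𝕜] [AddCommGroup V]
    [Module 𝕜 V] (hV : finrank 𝕜 V = 2) {x y : V ⊗[𝕜] V}
    (hxy : ∀ f g : Dual 𝕜 V, contrLeft f x ⊗ₜ[𝕜] contrRight g y ∈ Submodule.span 𝕜 {x, y})
    (hyx : ∀ f g : Dual 𝕜 V, contrLeft f y ⊗ₜ[𝕜] contrRight g x ∈ Submodule.span 𝕜 {x, y}) :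
    ¬ LinearIndependent 𝕜 ![x, y] := by
  have : Module.Finite 𝕜 V := Module.finite_of_finrank_eq_succ hV
  let b := finBasisOfFinrankEq 𝕜 V hV
  let Φ := tensorMatrix b b
  have hΦ : ∀ z ∈ Submodule.span 𝕜 {x, y}, Φ z ∈ Submodule.span 𝕜 {Φ x, Φ y} := fun z hz => by
    simpa [Submodule.map_span, Set.image_pair] using
      Submodule.mem_map_of_mem (f := Φ.toLinearMap) hz
  intro hind
  refine not_linearIndependent_of_vecMulVec_mem_span (X := Φ x) (Y := Φ y)
    (fun i l => ?_) (fun i l => ?_) ?_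
  · simpa [Φ, repr_contrLeft_coord, repr_contrRight_coord] using
      hΦ _ (hxy (b.coord i) (b.coord l))
  · simpa [Φ, repr_contrLeft_coord, repr_contrRight_coord] using
      hΦ _ (hyx (b.coord i) (b.coord l))
  · exact hind.pair_map Φ.injective

section SubproductSystem

open TensorProduct

variable {E : ℕ+ → Type*} [∀ t, NormedAddCommGroup (E t)] [∀ t, InnerProductSpace ℂ (E t)]
  {β : ∀ s t : ℕ+, E (s + t) →ₗᵢ[ℂ] (E s ⊗[ℂ] E t)}

lemma map_contr_comp_mem_range (hassoc : SubprodAssoc E β) {r s s' t : ℕ+}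
    (f : Module.Dual ℂ (E r)) (g : Module.Dual ℂ (E t)) (w : E (r + s + (s' + t))) :
    map (contrLeft f ∘ₗ (β r s).toLinearMap) (contrRight g ∘ₗ (β s' t).toLinearMap)
        (β (r + s) (s' + t) w) ∈ LinearMap.range (β s s').toLinearMap := by
  set e := contrLeft f (β r (s + (s' + t)) (castE E (add_assoc r s (s' + t)) w))
  have h₁ := hassoc r s (s' + t) w
  have h₂ := hassoc s s' t ((castE E (add_assoc s s' t)).symm e)
  rw [LinearIsometryEquiv.apply_symm_apply] at h₂
  refine ⟨contrRight g (β (s + s') t ((castE E (add_assoc s s' t)).symm e)), ?_⟩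
  symm
  calc map (contrLeft f ∘ₗ (β r s).toLinearMap) (contrRight g ∘ₗ (β s' t).toLinearMap)
        (β (r + s) (s' + t) w)
      = map LinearMap.id (contrRight g ∘ₗ (β s' t).toLinearMap)
          (map (contrLeft f) LinearMap.id (map (β r s).toLinearMap LinearMap.id
            (β (r + s) (s' + t) w))) := by
        simp only [← LinearMap.comp_apply, ← map_comp, LinearMap.id_comp, LinearMap.comp_id]
    _ = map LinearMap.id (contrRight g ∘ₗ (β s' t).toLinearMap) (β s (s' + t) e) := by
        rw [← LinearEquiv.symm_apply_apply (TensorProduct.assoc ℂ _ _ _)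
          (map (β r s).toLinearMap LinearMap.id _), h₁, map_contrLeft_assoc_symm,
          contrLeft_map_id]
        rfl
    _ = map LinearMap.id (contrRight g) (map LinearMap.id (β s' t).toLinearMap
          (β s (s' + t) e)) := by
        simp only [← LinearMap.comp_apply, ← map_comp, LinearMap.id_comp]
    _ = _ := by rw [← h₂, map_contrRight_assoc, contrRight_map_id]

end SubproductSystem

open Module in
theorem not_linearIndependent_of_β_eq_tmul_swap {E : ℕ+ → Type*}
    [∀ t, NormedAddCommGroup (E t)] [∀ t, InnerProductSpace ℂ (E t)]
    {β : ∀ s t : ℕ+, E (s + t) →ₗᵢ[ℂ] (E s ⊗[ℂ] E t)} (hassoc : SubprodAssoc E β) {r : ℕ+}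
    (hr : finrank ℂ (E r) = 2) (hrr : finrank ℂ (E (r + r)) = 2) {u₁ v₁ : E (r + r)}
    {u₂ v₂ : E (r + r + (r + r))} (hu : β (r + r) (r + r) u₂ = u₁ ⊗ₜ[ℂ] v₁)
    (hv : β (r + r) (r + r) v₂ = v₁ ⊗ₜ[ℂ] u₁) :
    ¬ LinearIndependent ℂ ![u₁, v₁] := by
  intro hind
  have hrange : LinearMap.range (β r r).toLinearMap =
      Submodule.span ℂ {β r r u₁, β r r v₁} := by
    rw [LinearMap.range_eq_map, ← hind.span_eq_top_of_card_eq_finrank (by simp [hrr]),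
      Submodule.map_span, Matrix.range_cons_cons_empty, Set.image_pair]
    rfl
  refine not_linearIndependent_of_contr_tmul_mem_span hr (x := β r r u₁) (y := β r r v₁)
    (fun f g => ?_) (fun f g => ?_) (hind.pair_map (f := (β r r).toLinearMap) (β r r).injective)
  · have := map_contr_comp_mem_range hassoc f g u₂
    rwa [hu, TensorProduct.map_tmul, hrange] at this
  · have := map_contr_comp_mem_range hassoc f g v₂
    rwa [hv, TensorProduct.map_tmul, hrange] at this

/-- The system `(E_{2t})_t` obtained by restriction to even times never has a basis of
type `𝓔₂(a)`. -/
theorem statement13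
    (E : ℕ+ → Type*) [∀ t, NormedAddCommGroup (E t)] [∀ t, InnerProductSpace ℂ (E t)]
    (hdim : ∀ t, Module.finrank ℂ (E t) = 2)
    (β : ∀ s t : ℕ+, E (s + t) →ₗᵢ[ℂ] (E s ⊗[ℂ] E t))
    (hassoc : SubprodAssoc E β) :
    ¬ ∃ (u v : ∀ t : ℕ+, E (2 * t)) (a : ℝ), 0 ≤ a ∧ a < 1 ∧
      IsBasisE2 (fun t => E (2 * t)) (restrictβ E β 2) a u v := by
  rintro ⟨u, v, a, ha₀, ha₁, hu, hv, huv, -, hu_odd, -, hv_odd⟩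
  have hind : LinearIndependent ℂ ![u 1, v 1] := by
    refine linearIndependent_pair_of_norm_inner_lt (norm_ne_zero_iff.1 (by simp [hu])) ?_
    rw [huv, hu, hv]
    simpa [abs_of_nonneg ha₀] using ha₁
  -- `2 * 1 = 1 + 1` and `2 * 2 = 1 + 1 + (1 + 1)` hold definitionally in `ℕ+`
  exact not_linearIndependent_of_β_eq_tmul_swap hassoc (hdim 1) (hdim 2) (u₂ := u 2)
    (v₂ := v 2) (hu_odd 1 1 (by decide)) (hv_odd 1 1 (by decide)) hind

end SubprodHilbert
end
end

section
/- Let (E_t, β_{s,t})_{s,t∈ℚ_{>0}} be a rational-time subproduct system of two-dimensional Hilbert spaces with vectors x_t, y_t ∈ E_t satisfying Condition (3): there are c ∈ (0,∞) and complex numbers η_t with |η_t|=1, η_{s+t}=η_s·η_t, such that ‖x_t‖=1, ⟨x_t,y_t⟩=0, ‖y_t‖² = t if c=1 and ‖y_t‖² = (c^{2t}−1)/(c²−1) if c≠1, β_{s,t}(x_{s+t})=x_s⊗x_t, β_{s,t}(y_{s+t})=y_s⊗x_t + c^s η_s x_s⊗y_t for all s,t ∈ ℚ_{>0}. Then for every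 t ∈ ℚ ∩ (0,1): ⟨β_{t,1−t}(y_1), ξ_{1−t,t}(β_{1−t,t}(y_1))⟩ = η_t · (c^t ‖y_{1−t}‖² + c^{1−t} · conj(η_1) · ‖y_t‖²). -/
noncomputable section

open scoped TensorProduct ComplexConjugate

namespace SubprodHilbert

section TensorConstruction


variable {E F : Type*} [NormedAddCommGroup E] [InnerProductSpace ℂ E]
  [NormedAddCommGroup F] [InnerProductSpace ℂ F]

local notation "⟪" x ", " y "⟫" => @inner ℂ _ _ x y

end TensorConstruction


/-- The positive rationals, the time domain of a rational-time subproduct system. -/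
abbrev Qpos : Type := {q : ℚ // 0 < q}

section Rational

variable (E : Qpos → Type*)
  [∀ t, NormedAddCommGroup (E t)] [∀ t, InnerProductSpace ℂ (E t)]
variable (β : ∀ s t : Qpos, E (s + t) →ₗᵢ[ℂ] (E s ⊗[ℂ] E t))

/-- The associativity condition in the definition of a rational-time subproduct system. -/
def SubprodAssocQ : Prop :=
  ∀ r s t : Qpos, ∀ u : E (r + s + t),
    (TensorProduct.assoc ℂ (E r) (E s) (E t))
      (TensorProduct.map (β r s).toLinearMap LinearMap.id (β (r + s) t u))
    = TensorProduct.map LinearMap.id (β s t).toLinearMap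
        (β r (s + t) (castE E (add_assoc r s t) u))

/-- Condition (1) of Theorem 3.1, with the parameter `a` explicit:
`(x, y)` behaves like two exponential units at angle `aᵗ`. -/
def Cond1With (a : ℝ) (x y : ∀ t : Qpos, E t) : Prop :=
  (∀ t, ‖x t‖ = 1) ∧ (∀ t, ‖y t‖ = 1) ∧
  (∀ t : Qpos, (inner ℂ (x t) (y t) : ℂ) = ((a ^ ((t : ℚ) : ℝ) : ℝ) : ℂ)) ∧
  (∀ s t : Qpos, β s t (x (s + t)) = x s ⊗ₜ[ℂ] x t) ∧
  (∀ s t : Qpos, β s t (y (s + t)) = y s ⊗ₜ[ℂ] y t)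

/-- Condition (1) of Theorem 3.1: `∃ a ∈ [0,1)` as in `Cond1With`. -/
def Cond1 (x y : ∀ t : Qpos, E t) : Prop :=
  ∃ a : ℝ, 0 ≤ a ∧ a < 1 ∧ Cond1With E β a x y

/-- Condition (3) of Theorem 3.1, with the parameter `c` and the multiplicative
unimodular family `η` explicit. -/
def Cond3With (c : ℝ) (η : Qpos → ℂ) (x y : ∀ t : Qpos, E t) : Prop :=
  (∀ t, ‖η t‖ = 1) ∧ (∀ s t : Qpos, η (s + t) = η s * η t) ∧
  (∀ t, ‖x t‖ = 1) ∧ (∀ t : Qpos, (inner ℂ (x t) (y t) : ℂ) = 0) ∧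
  (∀ t : Qpos, ‖y t‖ ^ 2 =
    if c = 1 then ((t : ℚ) : ℝ) else (c ^ (2 * ((t : ℚ) : ℝ)) - 1) / (c ^ 2 - 1)) ∧
  (∀ s t : Qpos, β s t (x (s + t)) = x s ⊗ₜ[ℂ] x t) ∧
  (∀ s t : Qpos, β s t (y (s + t)) =
    y s ⊗ₜ[ℂ] x t + (((c ^ ((s : ℚ) : ℝ) : ℝ) : ℂ) * η s) • (x s ⊗ₜ[ℂ] y t))

/-- Condition (3) of Theorem 3.1. -/
def Cond3 (x y : ∀ t : Qpos, E t) : Prop :=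
  ∃ c : ℝ, 0 < c ∧ ∃ η : Qpos → ℂ, Cond3With E β c η x y

/-- Condition (4) of Theorem 3.1. -/
def Cond4 (x y : ∀ t : Qpos, E t) : Prop :=
  (∀ t, ‖x t‖ = 1) ∧ (∀ t, ‖y t‖ = 1) ∧
  (∀ t : Qpos, (inner ℂ (x t) (y t) : ℂ) = 0) ∧
  (∀ s t : Qpos, β s t (x (s + t)) = x s ⊗ₜ[ℂ] x t) ∧
  (∀ s t : Qpos, β s t (y (s + t)) = y s ⊗ₜ[ℂ] x t)

/-- Condition (5) of Theorem 3.1. -/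
def Cond5 (x y : ∀ t : Qpos, E t) : Prop :=
  (∀ t, ‖x t‖ = 1) ∧ (∀ t, ‖y t‖ = 1) ∧
  (∀ t : Qpos, (inner ℂ (x t) (y t) : ℂ) = 0) ∧
  (∀ s t : Qpos, β s t (x (s + t)) = x s ⊗ₜ[ℂ] x t) ∧
  (∀ s t : Qpos, β s t (y (s + t)) = x s ⊗ₜ[ℂ] y t)

/-- The function `t ↦ ⟨β_{t,1-t} h, ξ_{1-t,t} β_{1-t,t} h⟩` on `ℚ ∩ (0,1)` (written here
with the two arguments of the inner product exchanged, to match the convention of Mathlib's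
`inner`, which is conjugate-linear in its first argument), extended by `‖h‖²` elsewhere. -/
def flipInnerFn (h : E 1) : ℚ → ℂ := fun t =>
  if ht : 0 < t ∧ t < 1 then
    (inner ℂ
      ((TensorProduct.comm ℂ (E ⟨1 - t, by linarith [ht.2]⟩) (E ⟨t, ht.1⟩))
        (β ⟨1 - t, by linarith [ht.2]⟩ ⟨t, ht.1⟩
          (castE E (by apply Subtype.ext; simp) h)))
      (β ⟨t, ht.1⟩ ⟨1 - t, by linarith [ht.2]⟩
        (castE E (by apply Subtype.ext; simp) h)) : ℂ)
  else ((‖h‖ : ℂ)) ^ 2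

end Rational


lemma castE_apply {ι : Type*} (E : ι → Type*) [∀ t, NormedAddCommGroup (E t)]
    [∀ t, InnerProductSpace ℂ (E t)] (y : ∀ t, E t) {a b : ι} (h : a = b) :
    castE E h (y a) = y b := by
  subst h; rfl

lemma inner_tmul_add_smul_tmul {A B : Type*} [NormedAddCommGroup A] [InnerProductSpace ℂ A]
    [NormedAddCommGroup B] [InnerProductSpace ℂ B] {xa ya : A} {xb yb : B}
    (hxa : ‖xa‖ = 1) (hxb : ‖xb‖ = 1)
    (ha : (inner ℂ xa ya : ℂ) = 0) (hb : (inner ℂ xb yb : ℂ) = 0) (p q : ℂ) :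
    (inner ℂ (xa ⊗ₜ[ℂ] yb + p • (ya ⊗ₜ[ℂ] xb)) (ya ⊗ₜ[ℂ] xb + q • (xa ⊗ₜ[ℂ] yb)) : ℂ)
      = conj p * (‖ya‖ : ℂ) ^ 2 + q * (‖yb‖ : ℂ) ^ 2 := by
  -- `inner` on `A ⊗[ℂ] B` elaborates to Mathlib's `TensorProduct.instInner`, which the
  -- inner-product-space instance declared above does not reduce to; use Mathlib's structure.
  let : NormedAddCommGroup (A ⊗[ℂ] B) := TensorProduct.instNormedAddCommGroup
  let : InnerProductSpace ℂ (A ⊗[ℂ] B) := TensorProduct.instInnerProductSpace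
  have ha' : (inner ℂ ya xa : ℂ) = 0 := inner_eq_zero_symm.mp ha
  have hb' : (inner ℂ yb xb : ℂ) = 0 := inner_eq_zero_symm.mp hb
  simp only [inner_add_left, inner_add_right, inner_smul_left, inner_smul_right,
    TensorProduct.inner_tmul]
  simp only [ha, hb, ha', hb', inner_self_eq_norm_sq_to_K, hxa, hxb, RCLike.ofReal_one,
    RCLike.ofReal_eq_complex_ofReal]
  ring

/-- The two arguments of the inner product are exchanged relative to the paper, since Mathlib's
`inner` is conjugate-linear in its first argument. -/
theorem statement16
    (E : Qpos → Type*) [∀ t, NormedAddCommGroup (E t)] [∀ t, InnerProductSpace ℂ (E t)]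
    (β : ∀ s t : Qpos, E (s + t) →ₗᵢ[ℂ] (E s ⊗[ℂ] E t))
    (c : ℝ) (η : Qpos → ℂ)
    (x y : ∀ t : Qpos, E t) (h3 : Cond3With E β c η x y) :
    ∀ s t : Qpos, ∀ hst : s + t = 1,
      (inner ℂ
        ((TensorProduct.comm ℂ (E t) (E s))
          (β t s (castE E (by rw [add_comm t s]; exact hst.symm) (y 1))))
        (β s t (castE E hst.symm (y 1))) : ℂ)
      = η s * (((c ^ ((s : ℚ) : ℝ) : ℝ) : ℂ) * ((‖y t‖ : ℂ)) ^ 2 +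
          ((c ^ ((t : ℚ) : ℝ) : ℝ) : ℂ) * (starRingEnd ℂ) (η 1) * ((‖y s‖ : ℂ)) ^ 2) := by
  intro s t hst
  obtain ⟨hη_norm, hη_add, hx_norm, hxy, -, -, hβy⟩ := h3
  have hη_one : η 1 = η s * η t := hst ▸ hη_add s t
  have hη_unit : η s * conj (η s) = 1 := by
    rw [Complex.mul_conj, Complex.normSq_eq_norm_sq, hη_norm]; norm_num
  rw [castE_apply, castE_apply, hβy, hβy, map_add, map_smul, TensorProduct.comm_tmul,
    TensorProduct.comm_tmul, inner_tmul_add_smul_tmul (hx_norm s) (hx_norm t) (hxy s) (hxy t),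
    hη_one]
  simp only [map_mul, Complex.conj_ofReal]
  linear_combination (-(((c ^ ((t : ℚ) : ℝ) : ℝ) : ℂ) * conj (η t) * (‖y s‖ : ℂ) ^ 2)) * hη_unit

end SubprodHilbert
end
end
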